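/- arXiv:1311.6424 — 4 statements merged into one kernel-verified Lean document; each statement's English description precedes it below -/
import Mathlib

section
/- Let L be a number field and R = O_L[1/N] for some natural number N. Let T = Spec(R[x_1,...,x_n]/(f_1,...,f_m)) be an affine scheme of finite type over R. Suppose there are infinitely many maximal ideals 𝔭 of R such that the fiber T_𝔭 has a point over an algebraic closure of the residue field R/𝔭. Then T ×_R Q̄ has a Q̄-point, where Q̄ is an algebraic closure of ℚ. -/
/-!
If the `f_j` had no common zero over `ℚ̄`, the Nullstellensatz would give `∑ g_j f_j = 1` over
`ℚ̄`. For some nonzero integer `c` the polynomials `c g_j` have coefficients integral over `ℤ`,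
hence over `R`, and `c` lies in only finitely many primes of the Dedekind domain `R`, so some
`ker ψ_i` misses it. Since `O_L` is integral over `ℤ`, the map `R → ℚ̄` is injective, so lying
over extends `ψ_i` to the integral closure of `R` in `ℚ̄`;
specialising `∑ (c g_j) f_j = c` at a `K_i`-point of the fibre gives `ψ_i c = 0`.
-/

open MvPolynomial

theorem MvPolynomial.exists_sum_mul_eq_one_of_forall_exists_eval_ne_zero {K σ ι : Type*}
    [Field K] [IsAlgClosed K] [Finite σ] [Fintype ι] (p : ι → MvPolynomial σ K)
    (h : ∀ x : σ → K, ∃ j, eval x (p j) ≠ 0) :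
    ∃ g : ι → MvPolynomial σ K, ∑ j, g j * p j = 1 := by
  rw [← Ideal.mem_span_range_iff_exists_fun]
  by_contra hone
  obtain ⟨M, hM, hle⟩ := Ideal.exists_le_maximal _ ((Ideal.ne_top_iff_one _).2 hone)
  obtain ⟨x, rfl⟩ := isMaximal_iff_eq_vanishingIdeal_singleton.1 hM
  obtain ⟨j, hj⟩ := h x
  exact hj ((mem_vanishingIdeal_singleton_iff x (p j)).1 (hle (Ideal.subset_span ⟨j, rfl⟩)))

theorem MvPolynomial.exists_ne_zero_isIntegral_coeff_smul {R A σ ι : Type*} [CommRing R]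
    [NoZeroDivisors R] [CommRing A] [Algebra R A] [Algebra.IsAlgebraic R A] [Fintype ι]
    (g : ι → MvPolynomial σ A) : ∃ c : R, c ≠ 0 ∧ ∀ j d, IsIntegral R ((c • g j).coeff d) := by
  classical
  obtain ⟨c, hc0, hc⟩ := Algebra.IsAlgebraic.exists_integral_multiples R
    (Finset.univ.biUnion fun j => (g j).coeffs)
  refine ⟨c, hc0, fun j d => ?_⟩
  rw [coeff_smul]
  by_cases h : (g j).coeff d = 0
  · simpa [h] using isIntegral_zero
  · exact hc _ (Finset.mem_biUnion.2 ⟨j, Finset.mem_univ _, coeff_mem_coeffs d h⟩)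

theorem RingHom.injective_of_isIntegral_int {A D : Type*} [CommRing A] [IsDomain A]
    [Algebra.IsIntegral ℤ A] [CommRing D] [CharZero D] (g : A →+* D) :
    Function.Injective g := by
  rw [injective_iff_ker_eq_bot]
  refine Ideal.eq_bot_of_comap_eq_bot (R := ℤ) ?_
  rw [comap_ker]
  exact (injective_iff_ker_eq_bot _).1 (g.comp _).injective_int

theorem IsLocalization.injective_of_injective_comp_algebraMap {A R D : Type*} [CommRing A]
    [CommRing R] [Algebra A R] (M : Submonoid A) [IsLocalization M R] [CommRing D]
    (g : R →+* D) (hg : Function.Injective (g.comp (algebraMap A R))) : Function.Injective g := by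
  rw [RingHom.injective_iff_ker_eq_bot] at hg ⊢
  rw [← IsLocalization.map_under M R (RingHom.ker g), Ideal.under, RingHom.comap_ker, hg,
    Ideal.map_bot]

theorem Ideal.finite_setOf_isPrime_and_mem {R : Type*} [CommRing R] [IsDedekindDomain R]
    {r : R} (hr : r ≠ 0) : {P : Ideal R | P.IsPrime ∧ r ∈ P}.Finite := by
  refine ((Ideal.finite_factors (I := Ideal.span {r}) ?_).image
    IsDedekindDomain.HeightOneSpectrum.asIdeal).subset ?_
  · simpa [Ideal.span_singleton_eq_bot] using hr
  rintro P ⟨hP, hrP⟩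
  exact ⟨⟨P, hP, fun h => hr (by simpa [h] using hrP)⟩,
    Ideal.dvd_iff_le.2 ((Ideal.span_singleton_le_iff_mem P).2 hrP), rfl⟩

theorem Ideal.exists_notMem_of_injective {R ι : Type*} [CommRing R] [IsDedekindDomain R]
    [Infinite ι] (P : ι → Ideal R) (hP : ∀ i, (P i).IsPrime) (hinj : Function.Injective P)
    {r : R} (hr : r ≠ 0) : ∃ i, r ∉ P i := by
  by_contra! h
  refine Set.infinite_univ (α := ι) ?_
  convert (Ideal.finite_setOf_isPrime_and_mem hr).preimage hinj.injOn
  ext i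
  simp [hP i, h i]

theorem RingHom.exists_comp_algebraMap_eq_of_isIntegral {A B K : Type*} [CommRing A]
    [CommRing B] [Algebra A B] [Algebra.IsIntegral A B] [Field K] [IsAlgClosed K]
    (g : A →+* K) (hker : RingHom.ker (algebraMap A B) ≤ RingHom.ker g) :
    ∃ h : B →+* K, h.comp (algebraMap A B) = g := by
  set P := RingHom.ker g
  have : P.IsPrime := RingHom.ker_isPrime g
  obtain ⟨Q, -, hQ, hQP⟩ := Ideal.exists_ideal_over_prime_of_isIntegral (S := B) P ⊥
    (by rwa [← RingHom.ker_eq_comap_bot])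
  have : Q.LiesOver P := ⟨hQP.symm⟩
  let : Algebra (A ⧸ P) K := g.kerLift.toAlgebra
  have : FaithfulSMul (A ⧸ P) K :=
    (faithfulSMul_iff_algebraMap_injective _ _).mpr g.kerLift_injective
  have : Module.IsTorsionFree (A ⧸ P) (B ⧸ Q) := FaithfulSMul.to_isTorsionFree _ _
  let χ : (B ⧸ Q) →ₐ[A ⧸ P] K := IsAlgClosed.lift
  exact ⟨χ.toRingHom.comp (Ideal.Quotient.mk Q),
    RingHom.ext fun a => (χ.commutes (Ideal.Quotient.mk P a)).trans (g.kerLift_mk a)⟩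

theorem MvPolynomial.eq_zero_of_sum_mul_eq_C_of_isIntegral {R A K σ ι : Type*} [CommRing R]
    [CommRing A] [Algebra R A] [Field K] [IsAlgClosed K] [Fintype ι]
    (hA : Function.Injective (algebraMap R A)) (ψ : R →+* K)
    (f : ι → MvPolynomial σ R) (x : σ → K) (hx : ∀ j, eval x (map ψ (f j)) = 0)
    (g : ι → MvPolynomial σ A) (hg : ∀ j d, IsIntegral R ((g j).coeff d)) (r : R)
    (hsum : ∑ j, g j * map (algebraMap R A) (f j) = C (algebraMap R A r)) : ψ r = 0 := by
  let S := integralClosure R A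
  have hRSA : algebraMap R A = (algebraMap S A).comp (algebraMap R S) :=
    IsScalarTower.algebraMap_eq R S A
  have hS : Function.Injective (algebraMap S A) := Subtype.val_injective
  have hRS : Function.Injective (algebraMap R S) := by
    rw [hRSA, RingHom.coe_comp] at hA
    exact hA.of_comp
  obtain ⟨χ, hχ⟩ := ψ.exists_comp_algebraMap_eq_of_isIntegral (B := S)
    (by simp [(RingHom.injective_iff_ker_eq_bot _).1 hRS])
  have hlift (j : ι) : ∃ q : MvPolynomial σ S, map (algebraMap S A) q = g j :=
    mem_range_map_iff_coeffs_subset.2 fun a ha => by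
      obtain ⟨d, -, rfl⟩ := mem_coeffs_iff.1 ha
      exact ⟨⟨_, hg j d⟩, rfl⟩
  choose g' hg' using hlift
  have hsumS : ∑ j, g' j * map (algebraMap R S) (f j) = C (algebraMap R S r) := by
    apply map_injective _ hS
    simp only [map_sum, map_mul, map_map, map_C, hg', ← hRSA, hsum,
      ← IsScalarTower.algebraMap_apply]
  have := congrArg (fun p => eval x (map χ p)) hsumS
  simp only [map_sum, map_mul, map_map, hχ, map_C, eval_C, hx, mul_zero,
    Finset.sum_const_zero] at this
  rw [← RingHom.comp_apply, hχ] at this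
  exact this.symm

/-- Mori's lemma: if an affine scheme of finite type over `O_L[1/N]` has points over
algebraically closed fields with infinitely many distinct maximal residue ideals, then
it has a point over the algebraic closure of `ℚ`. -/
theorem stmt4 (L : Type) [Field L] [NumberField L]
    (N : NumberField.RingOfIntegers L)
    (R : Type) [CommRing R] [Algebra (NumberField.RingOfIntegers L) R]
    [IsLocalization.Away N R]
    (n m : ℕ) (f : Fin m → MvPolynomial (Fin n) R)
    (ι : Type) [Infinite ι]
    (K : ι → Type) [∀ i, Field (K i)] [∀ i, IsAlgClosed (K i)]
    (ψ : ∀ i, R →+* K i)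
    (hmax : ∀ i, (RingHom.ker (ψ i)).IsMaximal)
    (hinj : Function.Injective fun i => RingHom.ker (ψ i))
    (hsol : ∀ i, ∃ x : Fin n → K i,
      ∀ j, MvPolynomial.eval x (MvPolynomial.map (ψ i) (f j)) = 0)
    (φ : R →+* AlgebraicClosure ℚ) :
    ∃ x : Fin n → AlgebraicClosure ℚ,
      ∀ j, MvPolynomial.eval x (MvPolynomial.map φ (f j)) = 0 := by
  have hφ : Function.Injective φ :=
    IsLocalization.injective_of_injective_comp_algebraMap (Submonoid.powers N) φ
      (φ.comp _).injective_of_isIntegral_int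
  have : IsDomain R := hφ.isDomain φ
  have hN : N ≠ 0 := by
    rintro rfl
    simpa using IsLocalization.Away.algebraMap_isUnit (0 : NumberField.RingOfIntegers L) (S := R)
  have : IsDedekindDomain R :=
    IsLocalization.isDedekindDomain _ (powers_le_nonZeroDivisors_of_noZeroDivisors hN) R
  by_contra! hno
  obtain ⟨g, hg⟩ := exists_sum_mul_eq_one_of_forall_exists_eval_ne_zero _ hno
  -- `AlgebraicClosure.isAlgebraic` is passed by hand: instance search puts
  -- `DivisionRing.toRatAlgebra` on `AlgebraicClosure ℚ`, not the structure it is stated for.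
  have : Algebra.IsAlgebraic ℤ (AlgebraicClosure ℚ) := ⟨fun z =>
    (IsFractionRing.isAlgebraic_iff ℤ ℚ _).2 ((AlgebraicClosure.isAlgebraic ℚ).isAlgebraic z)⟩
  obtain ⟨c, hc0, hc⟩ := exists_ne_zero_isIntegral_coeff_smul (R := ℤ) g
  have hcR : (c : R) ≠ 0 := fun h => hc0 (by simpa using congrArg φ h)
  obtain ⟨i, hi⟩ := Ideal.exists_notMem_of_injective _ (fun i => (hmax i).isPrime) hinj hcR
  obtain ⟨x, hx⟩ := hsol i
  let := φ.toAlgebra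
  refine hi (eq_zero_of_sum_mul_eq_C_of_isIntegral hφ (ψ i) f x hx (fun j => c • g j)
    (fun j d => (hc j d).tower_top) c ?_)
  change ∑ j, (c • g j) * map φ (f j) = C (φ c)
  simp_rw [smul_mul_assoc]
  rw [← Finset.smul_sum, hg, map_intCast, map_intCast, Int.smul_one_eq_cast]
end

section
/- Let k be an algebraically closed field of characteristic p > 0 and A ∈ GL_n(k) an invertible matrix. Then the set of solutions x ∈ k^n of the equation x^{(p)} = A x, where x^{(p)} denotes the vector obtained by raising each coordinate of x to the p-th power, is an 𝔽_p-vector subspace of k^n of dimension exactly n over 𝔽_p. -/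
/-!
Let `φ x = A⁻¹ x^{(p)}`, an injective Frobenius-semilinear endomorphism of `k^n` whose fixed
points are the solutions. If the fixed points span `k^n` over `k`, a `k`-basis of fixed vectors
exists, the coordinates `c` of a fixed vector in it satisfy `c^p = c`, and the solutions are
exactly the `𝔽_p`-span of that basis.

To see that the span `W` of the fixed points is everything, note that `φ` induces an injective
semilinear map on `k^n / W`. If that quotient were nonzero it would contain a nonzero fixed vector,
which lifts to a fixed vector outside `W`, because `φ - 1` maps `W` onto itself (`t^p - t = c` is
solvable in `k`). A nonzero fixed vector exists for any injective `φ` on a nonzero space: take a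
minimal recurrence `φ^m v = ∑ aᵢ φ^i v`; along `v, φ v, …, φ^{m-1} v` the fixed vectors are cut
out by a polynomial equation `c(t)^p = t` with `X ∣ c`, and this has a nonzero root in `k`.
-/

open Polynomial Function Module Submodule Finset

namespace IsAlgClosed

variable {k : Type*} [Field k] [IsAlgClosed k] {p : ℕ}

theorem exists_pow_sub_self_eq (hp : 1 < p) (c : k) : ∃ t : k, t ^ p - t = c := by
  have hpos : 0 < (X ^ p - X : k[X]).degree := natDegree_pos_iff_degree_pos.mp <| by
    rw [FiniteField.X_pow_card_sub_X_natDegree_eq k hp]; omega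
  obtain ⟨t, ht⟩ := exists_root (X ^ p - X - C c) (by rw [degree_sub_C hpos]; exact hpos.ne')
  exact ⟨t, by simpa [sub_eq_zero] using ht⟩

theorem exists_ne_zero_eval_pow_eq_self (hp : 1 < p) {q : k[X]} (hq : q ≠ 0) (hXq : X ∣ q) :
    ∃ t ≠ 0, q.eval t ^ p = t := by
  obtain ⟨r, rfl⟩ := hXq
  have hr : r ≠ 0 := right_ne_zero_of_mul hq
  have hdeg : 0 < (X ^ (p - 1) * r ^ p).natDegree := by
    rw [natDegree_mul (pow_ne_zero _ X_ne_zero) (pow_ne_zero _ hr), natDegree_X_pow]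
    omega
  have hpos := natDegree_pos_iff_degree_pos.mp hdeg
  -- `(X r)^p - X = X (X^(p-1) r^p - 1)`, and the second factor does not vanish at `0`.
  obtain ⟨t, ht⟩ := exists_root (X ^ (p - 1) * r ^ p - C 1)
    (by rw [degree_sub_C hpos]; exact hpos.ne')
  have ht : t ^ (p - 1) * r.eval t ^ p = 1 := by simpa [sub_eq_zero] using ht
  have ht0 : t ≠ 0 := by
    rintro rfl
    simp [zero_pow (by omega : p - 1 ≠ 0)] at ht
  refine ⟨t, ht0, ?_⟩
  calc (X * r).eval t ^ p = t * (t ^ (p - 1) * r.eval t ^ p) := by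
        rw [eval_mul, eval_X, mul_pow, ← mul_assoc, ← pow_succ', Nat.sub_add_cancel hp.le]
    _ = t := by rw [ht, mul_one]

end IsAlgClosed

namespace Polynomial

variable {k : Type*} [Field k] {p : ℕ}

theorem pow_add_C_mul_X_ne_zero (hp : 1 < p) {q : k[X]} (hXq : X ∣ q) {a : k}
    (h : q ≠ 0 ∨ a ≠ 0) : q ^ p + C a * X ≠ 0 := by
  rcases eq_or_ne q 0 with rfl | hq
  · simpa [zero_pow (by omega : p ≠ 0)] using h.resolve_left (not_not.mpr rfl)
  have hq1 : 1 ≤ q.natDegree := natDegree_X (R := k) ▸ natDegree_le_of_dvd hXq hq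
  have hlt : (C a * X).natDegree < (q ^ p).natDegree := by
    rw [natDegree_pow]
    calc (C a * X).natDegree ≤ 1 := (natDegree_C_mul_le a X).trans natDegree_X_le
      _ < p * q.natDegree := by nlinarith
  exact ne_zero_of_natDegree_gt (natDegree_add_eq_left_of_natDegree_lt hlt ▸ hlt)

variable (p) in
/-- Evaluated at `t`, these are the coordinates, along `v, φ v, φ² v, …`, of the candidate fixed
vector in `exists_ne_zero_isFixedPt`. -/
noncomputable def frobeniusRec (a : ℕ → k) : ℕ → k[X]
  | 0 => 0
  | i + 1 => frobeniusRec a i ^ p + C (a i) * X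

theorem frobeniusRec_succ (a : ℕ → k) (i : ℕ) :
    frobeniusRec p a (i + 1) = frobeniusRec p a i ^ p + C (a i) * X := rfl

theorem X_dvd_frobeniusRec (hp : p ≠ 0) (a : ℕ → k) (i : ℕ) : X ∣ frobeniusRec p a i := by
  induction i with
  | zero => exact dvd_zero X
  | succ i ih => exact dvd_add (ih.trans (dvd_pow_self _ hp)) (dvd_mul_left X _)

theorem frobeniusRec_ne_zero (hp : 1 < p) {a : ℕ → k} {j i : ℕ} (hji : j < i) (ha : a j ≠ 0) :
    frobeniusRec p a i ≠ 0 := by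
  induction i, hji using Nat.le_induction with
  | base => exact pow_add_C_mul_X_ne_zero hp (X_dvd_frobeniusRec (by omega) a j) (.inr ha)
  | succ i _ ih => exact pow_add_C_mul_X_ne_zero hp (X_dvd_frobeniusRec (by omega) a i) (.inl ih)

end Polynomial

section Recurrence

variable {R M : Type*} [Ring R] [AddCommGroup M] [Module R M]

theorem exists_minimal_recurrence [IsNoetherian R M] {u : ℕ → M} (hu : u 0 ≠ 0) :
    ∃ m, ∃ a : ℕ → R, ∑ i ∈ range (m + 1), a i • u i = u (m + 1) ∧
      u m ∉ span R (u '' range m) := by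
  classical
  have hex : ∃ n, u n ∈ span R (u '' range n) := by
    obtain ⟨n, hn⟩ := monotone_stabilizes_iff_noetherian.mpr ‹_›
      ⟨fun n => span R (u '' range n), fun _ _ h => span_mono (Set.image_mono (by simpa using h))⟩
    exact ⟨n, (SetLike.ext_iff.mp (hn (n + 1) n.le_succ) _).mpr (subset_span ⟨n, by simp, rfl⟩)⟩
  have h0 : Nat.find hex ≠ 0 := fun h => by
    have := Nat.find_spec hex
    rw [h] at this
    exact hu (by simpa using this)
  obtain ⟨m, hm⟩ := Nat.exists_eq_succ_of_ne_zero h0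
  obtain ⟨a, ha⟩ := (mem_span_image_finset_iff_exists_fun' R).mp (hm ▸ Nat.find_spec hex)
  exact ⟨m, a, ha, Nat.find_min hex (hm ▸ m.lt_succ_self)⟩

theorem sum_range_succ_smul_ne_zero {K : Type*} [DivisionRing K] [Module K M] {u : ℕ → M} {m : ℕ}
    (hm : u m ∉ span K (u '' range m)) {b : ℕ → K} (hb : b m ≠ 0) :
    ∑ i ∈ range (m + 1), b i • u i ≠ 0 := by
  intro h
  rw [sum_range_succ] at h
  refine hm ((mem_span_image_finset_iff_exists_fun' K).mpr ⟨fun i => -(b m)⁻¹ * b i, ?_⟩)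
  calc ∑ i ∈ range m, (-(b m)⁻¹ * b i) • u i = (b m)⁻¹ • -∑ i ∈ range m, b i • u i := by
        simp [mul_smul, smul_sum]
    _ = u m := by rw [← eq_neg_of_add_eq_zero_right h, inv_smul_smul₀ hb]

end Recurrence

section FrobeniusSemilinear

variable {k V : Type*} [Field k] [AddCommGroup V] [Module k V] {p : ℕ} [ExpChar k p]
  (φ : V →ₛₗ[frobenius k p] V)

theorem apply_sum_eval_frobeniusRec_smul {u : ℕ → V} (hu : ∀ i, φ (u i) = u (i + 1))
    (a : ℕ → k) (t : k) (m : ℕ) :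
    φ (∑ i ∈ range m, (frobeniusRec p a (i + 1)).eval t • u i) =
      ∑ i ∈ range m, (frobeniusRec p a (i + 1)).eval t • u i - t • ∑ i ∈ range m, a i • u i
        + (frobeniusRec p a m).eval t ^ p • u m := by
  induction m with
  | zero => simp [frobeniusRec, zero_pow (expChar_pos k p).ne']
  | succ m ih =>
    rw [sum_range_succ, map_add, ih, LinearMap.map_smulₛₗ, hu, frobenius_def,
      sum_range_succ, frobeniusRec_succ a m, eval_add, eval_pow, eval_mul, eval_C, eval_X]
    module

theorem exists_ne_zero_isFixedPt [Fact p.Prime] [IsAlgClosed k] [FiniteDimensional k V]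
    [Nontrivial V] (hφ : Injective φ) : ∃ v ≠ 0, φ v = v := by
  have hp : 1 < p := (Fact.out : p.Prime).one_lt
  obtain ⟨v, hv⟩ := exists_ne (0 : V)
  set u : ℕ → V := fun i => φ^[i] v
  have hu : ∀ i, φ (u i) = u (i + 1) := fun i => (iterate_succ_apply' φ i v).symm
  obtain ⟨m, a, ha, hm⟩ := exists_minimal_recurrence (R := k) (u := u) hv
  obtain ⟨j, hj, haj⟩ : ∃ j < m + 1, a j ≠ 0 := by
    by_contra! h
    refine (hφ.iterate (m + 1)).ne hv ?_
    rw [iterate_map_zero]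
    change u (m + 1) = 0
    rw [← ha]
    exact sum_eq_zero fun i hi => by rw [h i (mem_range.mp hi), zero_smul]
  obtain ⟨t, ht0, ht⟩ := IsAlgClosed.exists_ne_zero_eval_pow_eq_self hp
    (frobeniusRec_ne_zero hp hj haj) (X_dvd_frobeniusRec (by omega) a (m + 1))
  refine ⟨∑ i ∈ range (m + 1), (frobeniusRec p a (i + 1)).eval t • u i,
    sum_range_succ_smul_ne_zero hm ?_, ?_⟩
  · intro h
    exact ht0 (by rw [← ht, h, zero_pow (by omega)])
  · rw [apply_sum_eval_frobeniusRec_smul φ hu, ha, ht, sub_add_cancel]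

end FrobeniusSemilinear

section FixedPoints

variable {R V : Type*} [Ring R] [AddCommGroup V] [Module R V] {σ : R →+* R}
  (φ : V →ₛₗ[σ] V)

theorem surjOn_span_fixedPoints (hσ : Surjective σ) :
    Set.SurjOn φ (span R (fixedPoints φ)) (span R (fixedPoints φ)) := by
  intro w hw
  induction hw using closure_induction with
  | zero => exact ⟨0, zero_mem _, map_zero φ⟩
  | add x y _ _ hx hy =>
    obtain ⟨x', hx', rfl⟩ := hx
    obtain ⟨y', hy', rfl⟩ := hy
    exact ⟨x' + y', add_mem hx' hy', map_add φ x' y'⟩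
  | smul_mem c x hx =>
    obtain ⟨c', rfl⟩ := hσ c
    exact ⟨c' • x, smul_mem _ _ (subset_span hx), by rw [LinearMap.map_smulₛₗ, hx.eq]⟩

theorem surjOn_sub_self_span_fixedPoints (hσ : ∀ c, ∃ t, σ t - t = c) :
    Set.SurjOn (fun v => φ v - v) (span R (fixedPoints φ)) (span R (fixedPoints φ)) := by
  intro w hw
  induction hw using closure_induction with
  | zero => exact ⟨0, zero_mem _, by simp⟩
  | add x y _ _ hx hy =>
    obtain ⟨x', hx', rfl⟩ := hx
    obtain ⟨y', hy', rfl⟩ := hy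
    exact ⟨x' + y', add_mem hx' hy', by simp only [map_add]; abel⟩
  | smul_mem c x hx =>
    obtain ⟨t, rfl⟩ := hσ c
    exact ⟨t • x, smul_mem _ _ (subset_span hx), by
      simp only [LinearMap.map_smulₛₗ, hx.eq, sub_smul]⟩

theorem Module.Basis.repr_apply_of_isFixedPt {ι : Type*} [Fintype ι] (b : Basis ι R V)
    (hb : ∀ i, φ (b i) = b i) (x : V) (i : ι) : b.repr (φ x) i = σ (b.repr x i) := by
  conv_lhs => rw [← b.sum_equivFun x, map_sum]
  simp only [LinearMap.map_smulₛₗ, hb, b.repr_sum_self, b.equivFun_apply]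

end FixedPoints

section FrobeniusFixedPoints

variable {k V : Type*} [Field k] [IsAlgClosed k] [AddCommGroup V] [Module k V]
  [FiniteDimensional k V] {p : ℕ} [Fact p.Prime] [CharP k p] (φ : V →ₛₗ[frobenius k p] V)

theorem span_fixedPoints_eq_top (hφ : Injective φ) : span k (fixedPoints φ) = ⊤ := by
  have hp : 1 < p := (Fact.out : p.Prime).one_lt
  set W := span k (fixedPoints φ)
  by_contra hW
  have hWφ : W ≤ W.comap φ := span_le.mpr fun v hv => subset_span (congrArg φ hv.eq)
  have hφW : Injective (W.mapQ W φ hWφ) := by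
    refine (injective_iff_map_eq_zero _).mpr fun x hx => ?_
    obtain ⟨v, rfl⟩ := W.mkQ_surjective x
    obtain ⟨w, hw, hwv⟩ := surjOn_span_fixedPoints φ
      (fun c => (IsAlgClosed.exists_pow_nat_eq c (by omega)).imp fun _ h => h)
      ((Submodule.Quotient.mk_eq_zero W).mp hx)
    exact (Submodule.Quotient.mk_eq_zero W).mpr (hφ hwv ▸ hw)
  have : Nontrivial (V ⧸ W) := Submodule.Quotient.nontrivial_iff.mpr hW
  obtain ⟨x', hx'0, hx'⟩ := exists_ne_zero_isFixedPt _ hφW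
  obtain ⟨x, rfl⟩ := W.mkQ_surjective x'
  obtain ⟨w, hw, hwx⟩ := surjOn_sub_self_span_fixedPoints φ
    (IsAlgClosed.exists_pow_sub_self_eq hp) ((Submodule.Quotient.eq W).mp hx')
  have hxw : x - w ∈ W := subset_span (show φ (x - w) = x - w by
    rw [map_sub]; exact sub_eq_sub_iff_sub_eq_sub.mp hwx.symm)
  exact hx'0 ((Submodule.Quotient.mk_eq_zero W).mpr (by simpa using add_mem hxw hw))

theorem exists_basis_isFixedPt (hφ : Injective φ) :
    ∃ (s : Set V) (b : Basis s k V), ∀ i, φ (b i) = b i := by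
  obtain ⟨s, hs, hspan, hli⟩ := exists_linearIndependent k (fixedPoints φ)
  refine ⟨s, Basis.mk hli ?_, fun i => by rw [Basis.mk_apply]; exact hs i.2⟩
  rw [Subtype.range_coe, hspan, span_fixedPoints_eq_top φ hφ]

end FrobeniusFixedPoints

section PrimeField

variable {k : Type*} [Field k] {p : ℕ} [Fact p.Prime] [CharP k p] [Algebra (ZMod p) k]

theorem pow_eq_self_iff_mem_range_algebraMap {x : k} :
    x ^ p = x ↔ x ∈ Set.range (algebraMap (ZMod p) k) := by
  rw [← Subfield.mem_bot_iff_pow_eq_self k p, ← ZMod.fieldRange_castHom_eq_bot p,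
    Subsingleton.elim (algebraMap (ZMod p) k) (ZMod.castHom dvd_rfl k)]
  rfl

theorem mem_span_range_iff_isFixedPt {V : Type*} [AddCommGroup V] [Module k V]
    [Module (ZMod p) V] [IsScalarTower (ZMod p) k V] (φ : V →ₛₗ[frobenius k p] V)
    {ι : Type*} [Fintype ι] (b : Basis ι k V) (hb : ∀ i, φ (b i) = b i) {x : V} :
    x ∈ span (ZMod p) (Set.range b) ↔ φ x = x := by
  simp_rw [b.mem_span_iff_repr_mem (ZMod p), b.ext_elem_iff (x := φ x),
    b.repr_apply_of_isFixedPt φ hb, frobenius_def, pow_eq_self_iff_mem_range_algebraMap]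

end PrimeField

theorem Matrix.inv_mulVec_eq_iff {n R : Type*} [Fintype n] [DecidableEq n] [CommRing R]
    {A : Matrix n n R} (hA : IsUnit A.det) {u v : n → R} : A⁻¹.mulVec u = v ↔ u = A.mulVec v := by
  constructor
  · rintro rfl
    rw [mulVec_mulVec, mul_nonsing_inv A hA, one_mulVec]
  · rintro rfl
    rw [mulVec_mulVec, nonsing_inv_mul A hA, one_mulVec]

variable (k ι : Type*) [CommRing k] (p : ℕ) [ExpChar k p] in
def piFrobenius : (ι → k) →ₛₗ[frobenius k p] (ι → k) where
  toFun x i := x i ^ p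
  map_add' x y := funext fun i => add_pow_expChar (x i) (y i) p
  map_smul' c x := funext fun i => mul_pow c (x i) p

theorem piFrobenius_injective (k ι : Type*) [CommRing k] [IsReduced k] (p : ℕ) [ExpChar k p] :
    Injective (piFrobenius k ι p) :=
  fun _ _ h => funext fun i => frobenius_inj k p (congrFun h i)

/-- Over an algebraically closed field of characteristic `p`, the solutions of
`x^{(p)} = A x` for invertible `A` form an `𝔽_p`-subspace of dimension exactly `n`. -/
theorem stmt8 (p : ℕ) [Fact p.Prime] (k : Type) [Field k] [IsAlgClosed k]
    [CharP k p] [Algebra (ZMod p) k] (n : ℕ)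
    (A : Matrix (Fin n) (Fin n) k) (hA : IsUnit A.det) :
    ∃ S : Submodule (ZMod p) (Fin n → k),
      (S : Set (Fin n → k)) = {x | (fun i => x i ^ p) = A.mulVec x} ∧
      Module.finrank (ZMod p) S = n := by
  set φ := A⁻¹.mulVecLin.comp (piFrobenius k (Fin n) p)
  have hφ : Injective φ :=
    (Matrix.mulVec_injective_iff_isUnit.mpr (Matrix.isUnit_nonsing_inv_iff.mpr
      ((Matrix.isUnit_iff_isUnit_det A).mpr hA))).comp (piFrobenius_injective k (Fin n) p)
  obtain ⟨s, b, hb⟩ := exists_basis_isFixedPt φ hφ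
  have := Module.Finite.finite_basis b
  have := Fintype.ofFinite s
  refine ⟨span (ZMod p) (Set.range b), Set.ext fun x => ?_, ?_⟩
  · rw [SetLike.mem_coe, mem_span_range_iff_isFixedPt φ b hb]
    exact Matrix.inv_mulVec_eq_iff hA
  · rw [finrank_eq_card_basis (b.restrictScalars (ZMod p)), ← finrank_eq_card_basis b,
      finrank_fin_fun]
end

section
/- Let R be a discrete valuation ring with uniformizer π, fraction field K and residue field κ. Let M_1, M_2 be finite free R-modules equipped with R-linear endomorphisms θ_1, θ_2 respectively, and suppose there is a K-linear isomorphism α : M_1 ⊗_R K → M_2 ⊗_R K with α ∘ θ_1 = θ_2 ∘ α. Suppose moreover that every nonzero κ-linear map β : M_1 ⊗ κ → M_2 ⊗ κ satisfying β ∘ θ̄_1 = θ̄_2 ∘ β is an isomorphism. Then there exists an R-linear isomorphism α' : M_1 → M_2 with α' ∘ θ_1 = θ_2 ∘ α'. -/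
/-!
Clearing denominators, a nonzero multiple of `α` comes from an integral map `f₀ : M₁ → M₂`, which
intertwines `θ₁` and `θ₂` because `M₂` embeds into `K ⊗ M₂`. By Krull's intersection theorem
`f₀ = π ^ n • f` with `f` not divisible by `π`, so the reduction of `f` mod `π` is a nonzero
intertwining map, hence bijective by hypothesis. A map of finite free modules over a local ring
whose reduction is bijective is itself bijective: its determinant is a unit modulo `π`.
-/

open TensorProduct Pointwise

theorem mk_one_injective_of_isTorsionFree (R : Type*) [CommRing R] [IsDomain R]
    (K : Type*) [Field K] [Algebra R K] [IsFractionRing R K]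
    (M : Type*) [AddCommGroup M] [Module R M] [Module.IsTorsionFree R M] :
    Function.Injective (TensorProduct.mk R K M 1) :=
  (IsLocalizedModule.injective_iff_isRegular (nonZeroDivisors R) _).mpr fun c ↦
    IsSMulRegular.of_ne_zero (nonZeroDivisors.coe_ne_zero c)

theorem LinearMap.comp_eq_comp_of_tmul_eq {R : Type*} [CommRing R] [IsDomain R]
    {K : Type*} [Field K] [Algebra R K] [IsFractionRing R K]
    {M₁ M₂ : Type*} [AddCommGroup M₁] [Module R M₁] [AddCommGroup M₂] [Module R M₂]
    [Module.IsTorsionFree R M₂] {θ₁ : M₁ →ₗ[R] M₁} {θ₂ : M₂ →ₗ[R] M₂}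
    {φ : K ⊗[R] M₁ →ₗ[K] K ⊗[R] M₂}
    (hφ : ∀ x, φ (θ₁.baseChange K x) = θ₂.baseChange K (φ x))
    {f : M₁ →ₗ[R] M₂} (hf : ∀ x, (1 : K) ⊗ₜ[R] f x = φ (1 ⊗ₜ x)) :
    f ∘ₗ θ₁ = θ₂ ∘ₗ f := by
  ext x
  apply mk_one_injective_of_isTorsionFree R K M₂
  simp only [TensorProduct.mk_apply, LinearMap.comp_apply]
  rw [hf, ← LinearMap.baseChange_tmul, hφ, ← hf, LinearMap.baseChange_tmul]

theorem Submodule.exists_eq_pow_smul_notMem_smul_top {R N : Type*} [CommRing R]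
    [IsNoetherianRing R] [IsLocalRing R] [AddCommGroup N] [Module R N] [Module.Finite R N]
    {π : R} (hπ : ¬IsUnit π) {m : N} (hm : m ≠ 0) :
    ∃ (n : ℕ) (m' : N), m = π ^ n • m' ∧ m' ∉ π • (⊤ : Submodule R N) := by
  have krull : ∃ k, m ∉ π ^ k • (⊤ : Submodule R N) := by
    by_contra! h
    have hI : Ideal.span {π} ≠ ⊤ := by rwa [Ne, Ideal.span_singleton_eq_top]
    refine hm ((Ideal.iInf_pow_smul_eq_bot_of_isLocalRing (M := N) _ hI).le
      (Submodule.mem_iInf _ |>.mpr fun k ↦ ?_))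
    rw [Ideal.span_singleton_pow, Submodule.ideal_span_singleton_smul]
    exact h k
  classical
  obtain ⟨n, hn⟩ : ∃ n, Nat.find krull = n + 1 :=
    Nat.exists_eq_succ_of_ne_zero fun h0 ↦ Nat.find_spec krull (by simp [h0])
  obtain ⟨m', -, rfl⟩ := (Submodule.mem_smul_pointwise_iff_exists _ _ _).mp
    (not_not.mp (Nat.find_min krull (m := n) (by omega)))
  refine ⟨n, m', rfl, fun hm' ↦ Nat.find_spec krull ?_⟩
  rw [hn, pow_succ, mul_smul]
  exact Submodule.smul_mem_pointwise_smul _ _ _ hm'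

theorem LinearMap.mem_smul_top_of_baseChange_eq_zero {R M₁ M₂ : Type*} [CommRing R]
    [AddCommGroup M₁] [Module R M₁] [Module.Free R M₁] [AddCommGroup M₂] [Module R M₂]
    {π : R} {f : M₁ →ₗ[R] M₂} (hf : f.baseChange (R ⧸ Ideal.span {π}) = 0) :
    f ∈ π • (⊤ : Submodule R (M₁ →ₗ[R] M₂)) := by
  have hdiv : ∀ x, ∃ z, π • z = f x := by
    intro x
    have h0 : (1 : R ⧸ Ideal.span {π}) ⊗ₜ[R] f x = 0 := by
      simpa using LinearMap.congr_fun hf (1 ⊗ₜ x)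
    have hx := congrArg (quotTensorEquivQuotSMul M₂ (Ideal.span {π})) h0
    rw [quotTensorEquivQuotSMul_mk_one_tmul, map_zero, Submodule.Quotient.mk_eq_zero,
      Submodule.ideal_span_singleton_smul, Submodule.mem_smul_pointwise_iff_exists] at hx
    obtain ⟨z, -, hz⟩ := hx
    exact ⟨z, hz⟩
  choose z hz using hdiv
  let b := Module.Free.chooseBasis R M₁
  refine (Submodule.mem_smul_pointwise_iff_exists _ _ _).mpr ⟨b.constr ℕ (z ∘ b), trivial, ?_⟩
  refine b.ext fun i ↦ ?_
  simp [hz]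

theorem LinearMap.bijective_of_bijective_baseChange {R M₁ M₂ : Type*} [CommRing R]
    [IsLocalRing R] [AddCommGroup M₁] [Module R M₁] [Module.Free R M₁] [Module.Finite R M₁]
    [AddCommGroup M₂] [Module R M₂] [Module.Free R M₂] [Module.Finite R M₂]
    {I : Ideal R} (hI : I ≠ ⊤) {f : M₁ →ₗ[R] M₂}
    (hf : Function.Bijective (f.baseChange (R ⧸ I))) :
    Function.Bijective f := by
  have : Nontrivial (R ⧸ I) := Ideal.Quotient.nontrivial_iff.mpr hI
  have : IsLocalHom (Ideal.Quotient.mk I) := isLocalHom_of_le_jacobson_bot I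
    ((IsLocalRing.le_maximalIdeal hI).trans (IsLocalRing.maximalIdeal_le_jacobson _))
  let e := LinearEquiv.ofBijective _ hf
  have hrank : Module.finrank R M₁ = Module.finrank R M₂ := by
    rw [← Module.finrank_baseChange (R := R ⧸ I), e.finrank_eq, Module.finrank_baseChange]
  let b₁ := Module.finBasis R M₁
  let b₂ := (Module.finBasis R M₂).reindex (finCongr hrank.symm)
  have hdet : IsUnit (LinearMap.toMatrix b₁ b₂ f).det := by
    apply isUnit_of_map_unit (Ideal.Quotient.mk I)
    have := e.isUnit_det (Algebra.TensorProduct.basis _ b₁) (Algebra.TensorProduct.basis _ b₂)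
    rwa [show (e : _ →ₗ[R ⧸ I] _) = f.baseChange _ from rfl, LinearMap.toMatrix_baseChange,
      ← RingHom.mapMatrix_apply, ← RingHom.map_det, Ideal.Quotient.algebraMap_eq] at this
  exact (LinearEquiv.ofIsUnitDet hdet).bijective

/-- Module-theoretic core of Langton's lemma over a DVR: an isomorphism over the
fraction field intertwining `θ₁, θ₂`, together with the property that any nonzero
intertwining map over the residue field is an isomorphism, yields an integral
intertwining isomorphism. -/
theorem stmt12 (R : Type) [CommRing R] [IsDomain R] [IsDiscreteValuationRing R]
    (π : R) (hπ : Irreducible π)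
    (K : Type) [Field K] [Algebra R K] [IsFractionRing R K]
    (M₁ M₂ : Type) [AddCommGroup M₁] [Module R M₁] [Module.Free R M₁] [Module.Finite R M₁]
    [AddCommGroup M₂] [Module R M₂] [Module.Free R M₂] [Module.Finite R M₂]
    (θ₁ : M₁ →ₗ[R] M₁) (θ₂ : M₂ →ₗ[R] M₂)
    (α : (K ⊗[R] M₁) ≃ₗ[K] (K ⊗[R] M₂))
    (hα : ∀ x, α (LinearMap.baseChange K θ₁ x) = LinearMap.baseChange K θ₂ (α x))
    (hβ : ∀ β : ((R ⧸ Ideal.span {π}) ⊗[R] M₁) →ₗ[R ⧸ Ideal.span {π}]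
        ((R ⧸ Ideal.span {π}) ⊗[R] M₂),
      β ≠ 0 →
      (∀ x, β (LinearMap.baseChange (R ⧸ Ideal.span {π}) θ₁ x) =
        LinearMap.baseChange (R ⧸ Ideal.span {π}) θ₂ (β x)) →
      Function.Bijective β) :
    ∃ α' : M₁ ≃ₗ[R] M₂, ∀ x, α' (θ₁ x) = θ₂ (α' x) := by
  have := Module.finitePresentation_of_projective R M₁
  obtain ⟨f₀, s, hf₀⟩ := Module.FinitePresentation.exists_lift_of_isLocalizedModule
    (nonZeroDivisors R) (TensorProduct.mk R K M₂ 1)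
    (α.toLinearMap.restrictScalars R ∘ₗ TensorProduct.mk R K M₁ 1)
  let φ := algebraMap R K s • α.toLinearMap
  have hφ : ∀ x, (1 : K) ⊗ₜ[R] f₀ x = φ (1 ⊗ₜ x) := fun x ↦ by
    simpa [φ, Submonoid.smul_def, algebraMap_smul] using LinearMap.congr_fun hf₀ x
  have hφθ : ∀ x, φ (θ₁.baseChange K x) = θ₂.baseChange K (φ x) := fun x ↦ by simp [φ, hα]
  rcases eq_or_ne f₀ 0 with rfl | hf₀
  · -- then `α` vanishes on `M₁`, so both modules are zero
    have hs : algebraMap R K s ≠ 0 :=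
      (map_ne_zero_iff _ (IsFractionRing.injective R K)).mpr (nonZeroDivisors.coe_ne_zero s)
    have : Subsingleton M₁ := subsingleton_of_forall_eq 0 fun x ↦
      mk_one_injective_of_isTorsionFree R K M₁ <| α.injective <| by
        simpa [φ, hs] using (hφ x).symm
    have : Subsingleton (K ⊗[R] M₂) := α.symm.injective.subsingleton
    have : Subsingleton M₂ := (mk_one_injective_of_isTorsionFree R K M₂).subsingleton
    exact ⟨LinearEquiv.ofSubsingleton _ _, fun _ ↦ Subsingleton.elim _ _⟩
  obtain ⟨n, f, rfl, hf⟩ := Submodule.exists_eq_pow_smul_notMem_smul_top hπ.not_isUnit hf₀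
  have hcomm : f ∘ₗ θ₁ = θ₂ ∘ₗ f := by
    have := LinearMap.comp_eq_comp_of_tmul_eq hφθ hφ
    ext x
    exact smul_right_injective M₂ (pow_ne_zero n hπ.ne_zero)
      (by simpa using LinearMap.congr_fun this x)
  have hbij := hβ (f.baseChange _) (mt LinearMap.mem_smul_top_of_baseChange_eq_zero hf)
    fun x ↦ by simp only [← LinearMap.comp_apply, ← LinearMap.baseChange_comp, hcomm]
  have hI : Ideal.span {π} ≠ ⊤ := by
    rw [Ne, Ideal.span_singleton_eq_top]
    exact hπ.not_isUnit
  exact ⟨LinearEquiv.ofBijective f (LinearMap.bijective_of_bijective_baseChange hI hbij),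
    LinearMap.congr_fun hcomm⟩
end

section
/- Let p be a prime, k a perfect field of characteristic p, W_2 = W_2(k) the ring of Witt vectors of length 2, and M a finite free W_2-module with M̄ := M/pM. Suppose S ⊆ End_{W_2}(M) is a W_2-subalgebra with the property that for every ψ ∈ S, the reduction ψ mod p ∈ End_k(M̄) is multiplication by a scalar in k, and moreover for every ψ ∈ S with ψ ≡ 0 mod p, the induced map ψ/p : M̄ → M̄ lies again in the image of S mod p. Then every element of S is multiplication by a scalar in W_2. -/
/-- If every element of a `W₂`-subalgebra `S` of endomorphisms of a finite free
`W₂`-module reduces to a scalar mod `p`, and `S` is closed under dividing by `p`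
modulo `p`, then every element of `S` is multiplication by a scalar of `W₂`. -/
theorem stmt13 (p : ℕ) [Fact p.Prime] (k : Type) [Field k] [CharP k p] [PerfectRing k p]
    (M : Type) [AddCommGroup M] [Module (TruncatedWittVector p 2 k) M]
    [Module.Free (TruncatedWittVector p 2 k) M]
    [Module.Finite (TruncatedWittVector p 2 k) M]
    (S : Subalgebra (TruncatedWittVector p 2 k)
      (Module.End (TruncatedWittVector p 2 k) M))
    (pM : Submodule (TruncatedWittVector p 2 k) M)
    (hpM : pM = Ideal.span {(p : TruncatedWittVector p 2 k)} •
      (⊤ : Submodule (TruncatedWittVector p 2 k) M))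
    (hscalar : ∀ ψ ∈ S, ∃ c : TruncatedWittVector p 2 k, ∀ m : M, ψ m - c • m ∈ pM)
    (hdiv : ∀ ψ ∈ S, (∀ m : M, ψ m ∈ pM) →
      ∀ χ : Module.End (TruncatedWittVector p 2 k) M,
        (∀ m : M, ψ m = (p : TruncatedWittVector p 2 k) • χ m) →
        ∃ ψ' ∈ S, ∀ m : M, χ m - ψ' m ∈ pM) :
    ∀ ψ ∈ S, ∃ c : TruncatedWittVector p 2 k, ∀ m : M, ψ m = c • m := by
  classical
  set W := TruncatedWittVector p 2 k
  -- p² = 0 in W₂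
  have hp2 : (p : W) * (p : W) = 0 := by
    have h : (p : W) ^ 2 = WittVector.truncate 2 ((p : WittVector p k) ^ 2) := by
      rw [RingHom.map_pow, map_natCast]
    have h0 : (p : W) ^ 2 = 0 := by
      rw [h]
      ext j
      rw [WittVector.coeff_truncate, TruncatedWittVector.coeff_zero]
      exact WittVector.coeff_p_pow_eq_zero p k (by omega)
    calc (p : W) * (p : W) = (p : W) ^ 2 := (sq _).symm
    _ = 0 := h0
  -- membership in pM
  have hmem : ∀ x : M, x ∈ pM ↔ ∃ y : M, (p : W) • y = x := by
    intro x
    rw [hpM, Submodule.ideal_span_singleton_smul, ← SetLike.mem_coe,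
      Submodule.coe_pointwise_smul]
    constructor
    · intro hx
      obtain ⟨y, -, hy⟩ := Set.mem_smul_set.mp hx
      exact ⟨y, hy⟩
    · rintro ⟨y, hy⟩
      exact Set.mem_smul_set.mpr ⟨y, trivial, hy⟩
  intro ψ hψ
  obtain ⟨c, hc⟩ := hscalar ψ hψ
  set ψ₀ : Module.End W M := ψ - algebraMap W (Module.End W M) c with hψ₀def
  have hψ₀app : ∀ m : M, ψ₀ m = ψ m - c • m := by
    intro m
    simp [hψ₀def, Module.algebraMap_end_apply]
  have hψ₀S : ψ₀ ∈ S := S.sub_mem hψ (S.algebraMap_mem c)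
  have hψ₀pM : ∀ m : M, ψ₀ m ∈ pM := fun m => (hψ₀app m) ▸ hc m
  -- construct χ with ψ₀ = p • χ using a basis
  let b := Module.Free.chooseBasis W M
  choose y hy using fun i => (hmem (ψ₀ (b i))).mp (hψ₀pM (b i))
  let χ : Module.End W M := b.constr W y
  have hχ : ∀ m : M, ψ₀ m = (p : W) • χ m := by
    have heq : ψ₀ = (p : W) • χ := by
      apply b.ext
      intro i
      rw [LinearMap.smul_apply]
      show ψ₀ (b i) = (p : W) • (b.constr W y) (b i)
      rw [Module.Basis.constr_basis, hy i]
    intro m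
    rw [heq, LinearMap.smul_apply]
  obtain ⟨ψ', hψ'S, hψ'⟩ := hdiv ψ₀ hψ₀S hψ₀pM χ hχ
  obtain ⟨d, hd⟩ := hscalar ψ' hψ'S
  refine ⟨c + p * d, fun m => ?_⟩
  have hsum : χ m - d • m ∈ pM := by
    have := pM.add_mem (hψ' m) (hd m)
    simpa [sub_add_sub_cancel] using this
  obtain ⟨u, hu⟩ := (hmem _).mp hsum
  have hχm : χ m = (p : W) • u + d • m := by
    rw [hu]; abel
  have : ψ m - c • m = (p : W) • χ m := by rw [← hψ₀app, hχ]
  rw [sub_eq_iff_eq_add] at this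
  rw [this, hχm, smul_add, smul_smul, smul_smul, hp2, zero_smul, zero_add,
    add_smul, add_comm]
end
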